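/- arXiv:2201.12953 — 3 statements merged into one kernel-verified Lean document; each statement's English description precedes it below -/
import Mathlib

section
/- For every integer m ≥ 0 and every integer i ≥ m + 1, the power sum S_i(−m) = Σ_{n ∈ A₊, deg n = i} n^m equals 0 in A. -/
open Polynomial

/-- The power sum `S_i(-m)`: the sum of `n ^ m` over monic polynomials `n` of degree `i`. -/
noncomputable def powerSum (F : Type*) [Field F] [Fintype F] (i m : ℕ) : Polynomial F :=
  ∑ᶠ n ∈ {n : Polynomial F | n.Monic ∧ n.natDegree = i}, n ^ m

/-- The restricted power sum `S̃_i(-m)`: the sum of `n ^ m` over monic polynomials `n` of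
degree `i` not divisible by `v`. -/
noncomputable def powerSumV (F : Type*) [Field F] [Fintype F] (v : Polynomial F) (i m : ℕ) :
    Polynomial F :=
  ∑ᶠ n ∈ {n : Polynomial F | n.Monic ∧ n.natDegree = i ∧ ¬ v ∣ n}, n ^ m

/-- `ζ_∞(-m_1, …, -m_r)`, the ∞-adic multiple zeta value at nonpositive integers:
the sum over `i_1 > ⋯ > i_r ≥ 0` of `S_{i_1}(-m_1) ⋯ S_{i_r}(-m_r)`.
Only `m 0, …, m (r-1)` are used.  The depth-0 value is `1`. -/
noncomputable def zetaInf (F : Type*) [Field F] [Fintype F] (r : ℕ) (m : ℕ → ℕ) :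
    Polynomial F :=
  ∑ᶠ i ∈ {i : Fin r → ℕ | StrictAnti i}, ∏ j : Fin r, powerSum F (i j) (m (j : ℕ))

/-- `ζ⋆_∞(-m_1, …, -m_r)`, the ∞-adic multiple zeta star value at nonpositive integers:
the sum over `i_1 ≥ ⋯ ≥ i_r ≥ 0` of `S_{i_1}(-m_1) ⋯ S_{i_r}(-m_r)`. -/
noncomputable def zetaInfStar (F : Type*) [Field F] [Fintype F] (r : ℕ) (m : ℕ → ℕ) :
    Polynomial F :=
  ∑ᶠ i ∈ {i : Fin r → ℕ | Antitone i}, ∏ j : Fin r, powerSum F (i j) (m (j : ℕ))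

/-- `ζ_v(-m_1, …, -m_r)`, the v-adic multiple zeta value at nonpositive integers. -/
noncomputable def zetaV (F : Type*) [Field F] [Fintype F] (v : Polynomial F) (r : ℕ)
    (m : ℕ → ℕ) : Polynomial F :=
  ∑ᶠ i ∈ {i : Fin r → ℕ | StrictAnti i}, ∏ j : Fin r, powerSumV F v (i j) (m (j : ℕ))

/-- `ζ⋆_v(-m_1, …, -m_r)`, the v-adic multiple zeta star value at nonpositive integers. -/
noncomputable def zetaVStar (F : Type*) [Field F] [Fintype F] (v : Polynomial F) (r : ℕ)
    (m : ℕ → ℕ) : Polynomial F :=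
  ∑ᶠ i ∈ {i : Fin r → ℕ | Antitone i}, ∏ j : Fin r, powerSumV F v (i j) (m (j : ℕ))

/-- `ζ_{<d}(-m_1, …, -m_r)`, the truncated multiple zeta value:
the sum over `d > i_1 > ⋯ > i_r ≥ 0` of `S_{i_1}(-m_1) ⋯ S_{i_r}(-m_r)`. -/
noncomputable def zetaLt (F : Type*) [Field F] [Fintype F] (d r : ℕ) (m : ℕ → ℕ) :
    Polynomial F :=
  ∑ᶠ i ∈ {i : Fin r → ℕ | StrictAnti i ∧ ∀ j, i j < d},
    ∏ j : Fin r, powerSum F (i j) (m (j : ℕ))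

/-- `ζ⋆_{<d}(-m_1, …, -m_r)`, the truncated multiple zeta star value. -/
noncomputable def zetaLtStar (F : Type*) [Field F] [Fintype F] (d r : ℕ) (m : ℕ → ℕ) :
    Polynomial F :=
  ∑ᶠ i ∈ {i : Fin r → ℕ | Antitone i ∧ ∀ j, i j < d},
    ∏ j : Fin r, powerSum F (i j) (m (j : ℕ))

/-- `ζ_{<d}(-m)`, the depth-one truncated zeta value `Σ_{d > i ≥ 0} S_i(-m)`. -/
noncomputable def zetaLtOne (F : Type*) [Field F] [Fintype F] (d m : ℕ) : Polynomial F :=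
  ∑ᶠ i ∈ {i : ℕ | i < d}, powerSum F i m


section PowerSumAux

set_option linter.unusedSectionVars false
set_option linter.unusedVariables false

variable {F : Type*} [Field F] [Fintype F]

noncomputable def polyOf (i : ℕ) (c : Fin i → F) : Polynomial F :=
  X ^ i + ∑ j : Fin i, C (c j) * X ^ (j : ℕ)

lemma coeff_sum_part (i : ℕ) (c : Fin i → F) (k : ℕ) :
    (∑ j : Fin i, C (c j) * X ^ (j : ℕ)).coeff k =
      if h : k < i then c ⟨k, h⟩ else 0 := by
  rw [finset_sum_coeff]
  simp only [coeff_C_mul, coeff_X_pow, mul_ite, mul_one, mul_zero]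
  split
  · next h =>
    rw [Finset.sum_eq_single (⟨k, h⟩ : Fin i)] <;> simp +contextual [Fin.ext_iff, eq_comm]
  · next h =>
    apply Finset.sum_eq_zero
    intro j _
    simp only [ite_eq_right_iff]
    intro hj
    exact absurd (hj ▸ j.isLt) h

lemma degree_sum_part_lt (i : ℕ) (hi : 0 < i) (c : Fin i → F) :
    (∑ j : Fin i, C (c j) * X ^ (j : ℕ)).degree < (i : WithBot ℕ) := by
  apply lt_of_le_of_lt (degree_sum_le _ _)
  rw [Finset.sup_lt_iff (by exact_mod_cast WithBot.bot_lt_coe i)]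
  intro j _
  apply lt_of_le_of_lt (degree_C_mul_X_pow_le _ _)
  exact_mod_cast j.isLt

lemma polyOf_monic (i : ℕ) (hi : 0 < i) (c : Fin i → F) : (polyOf i c).Monic := by
  apply (monic_X_pow i).add_of_left
  rw [degree_X_pow]
  exact degree_sum_part_lt i hi c

lemma polyOf_natDegree (i : ℕ) (hi : 0 < i) (c : Fin i → F) :
    (polyOf i c).natDegree = i := by
  have : (polyOf i c).degree = i := by
    rw [polyOf, degree_add_eq_left_of_degree_lt, degree_X_pow]
    rw [degree_X_pow]; exact degree_sum_part_lt i hi c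
  exact natDegree_eq_of_degree_eq_some this

lemma polyOf_injective (i : ℕ) : Function.Injective (polyOf (F := F) i) := by
  intro c c' hcc
  funext j
  have h1 := congrArg (fun p => Polynomial.coeff p (j : ℕ)) hcc
  simp only [polyOf, coeff_add, coeff_sum_part] at h1
  simpa [j.isLt, Fin.eta] using h1

lemma polyOf_range (i : ℕ) (hi : 0 < i) :
    {n : Polynomial F | n.Monic ∧ n.natDegree = i} = Set.range (polyOf i) := by
  ext n
  constructor
  · rintro ⟨hm, hd⟩
    refine ⟨fun j => n.coeff (j : ℕ), ?_⟩
    ext k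
    rw [polyOf, coeff_add, coeff_sum_part, coeff_X_pow]
    rcases lt_trichotomy k i with hk | hk | hk
    · simp [hk, hk.ne, hk.ne']
    · subst hk
      have h1 := hm.coeff_natDegree
      rw [hd] at h1
      simp [h1]
    · rw [if_neg hk.ne', dif_neg (not_lt.mpr hk.le), add_zero,
        coeff_eq_zero_of_natDegree_lt (hd ▸ hk)]
  · rintro ⟨c, rfl⟩
    exact ⟨polyOf_monic i hi c, polyOf_natDegree i hi c⟩




lemma card_cast_zero' : ((Fintype.card F : Polynomial F)) = 0 := by
  have h : ((Fintype.card F : F)) = 0 := FiniteField.cast_card_eq_zero F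
  rw [← map_natCast (C : F →+* Polynomial F), h, map_zero]

lemma sum_const_coord {ι : Type*} [Fintype ι] [DecidableEq ι] (j₀ : ι)
    (h : (ι → F) → Polynomial F)
    (hinv : ∀ c x, h (Function.update c j₀ x) = h c) :
    ∑ c : ι → F, h c = 0 := by
  classical
  set e := Equiv.piSplitAt j₀ (fun _ : ι => F) with he
  rw [← Equiv.sum_comp e.symm h, Fintype.sum_prod_type]
  have key : ∀ (x : F) rest, h (e.symm (x, rest)) = h (e.symm (0, rest)) := by
    intro x rest
    have h2 : e.symm (x, rest) = Function.update (e.symm (0, rest)) j₀ x := by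
      funext j
      by_cases hj : j = j₀
      · subst hj; simp [he, Equiv.piSplitAt, Function.update]
      · simp [he, Equiv.piSplitAt, Function.update, hj]
    rw [h2, hinv]
  simp_rw [key]
  rw [Finset.sum_const, Finset.card_univ, nsmul_eq_mul]
  rw [show ((Fintype.card F : Polynomial F)) = 0 from card_cast_zero', zero_mul]

lemma sum_polyOf_pow (i m : ℕ) (him : m + 1 ≤ i) :
    ∑ c : Fin i → F, (polyOf i c) ^ m = 0 := by
  classical
  set a : (Fin i → F) → Option (Fin i) → Polynomial F :=
    fun c o => o.elim (X ^ i) (fun j => C (c j) * X ^ (j : ℕ)) with ha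
  have hpow : ∀ c : Fin i → F, (polyOf i c) ^ m =
      ∑ g : Fin m → Option (Fin i), ∏ k : Fin m, a c (g k) := by
    intro c
    have h1 : polyOf i c = ∑ o : Option (Fin i), a c o := by
      rw [Fintype.sum_option]; rfl
    rw [h1, show (∑ o : Option (Fin i), a c o) ^ m =
          ∏ _k : Fin m, (∑ o : Option (Fin i), a c o) from by
        rw [Finset.prod_const, Finset.card_univ, Fintype.card_fin]]
    rw [Finset.prod_univ_sum (fun _ : Fin m => (Finset.univ : Finset (Option (Fin i))))
      (fun _ o => a c o), Fintype.piFinset_univ]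
  simp_rw [hpow]
  rw [Finset.sum_comm]
  apply Finset.sum_eq_zero
  intro g _
  -- find a coordinate not hit by g
  have hex : ∃ j₀ : Fin i, ∀ k, g k ≠ some j₀ := by
    by_contra hno
    push_neg at hno
    choose w hw using hno
    have hinj : Function.Injective w := by
      intro j j' hjj
      have := (hw j).symm.trans (hjj ▸ hw j')
      exact Option.some_injective _ this
    have := Fintype.card_le_of_injective w hinj
    simp only [Fintype.card_fin] at this
    omega
  obtain ⟨j₀, hj₀⟩ := hex
  apply sum_const_coord j₀
  intro c x
  apply Finset.prod_congr rfl
  intro k _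
  cases hgk : g k with
  | none => simp [ha]
  | some j =>
    have hne : j ≠ j₀ := fun hjj => hj₀ k (hgk.trans (by rw [hjj]))
    simp [ha, Function.update_of_ne hne]

end PowerSumAux

/-- For every integer `m ≥ 0` and every `i ≥ m + 1`, the power sum
`S_i(-m) = Σ_{n ∈ A₊, deg n = i} n^m` vanishes in `A = 𝔽_q[θ]`. -/
theorem powerSum_eq_zero_of_lt (F : Type*) [Field F] [Fintype F] (m i : ℕ)
    (h : m + 1 ≤ i) : powerSum F i m = 0 := by
  have hi : 0 < i := by omega
  rw [powerSum, polyOf_range i hi, finsum_mem_range (polyOf_injective i),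
    finsum_eq_sum_of_fintype, sum_polyOf_pow i m h]
end

section
/- (Kummer-type congruence for v-adic multiple zeta star values.) Let e ≥ 1, r ≥ 1, and let (m_1,…,m_r), (l_1,…,l_r) ∈ ℤ_{≥0}^r satisfy m_i ≡ l_i mod (q^d − 1)·q^{(e−1)d} for all 1 ≤ i ≤ r. Then ζ_v⋆(−m_1,…,−m_r) ≡ ζ_v⋆(−l_1,…,−l_r) mod v^e in A, i.e., v^e divides ζ_v⋆(−m_1,…,−m_r) − ζ_v⋆(−l_1,…,−l_r). -/
open Polynomial

/-! Every `n` prime to `v` satisfies `n ^ (q^d - 1) = 1 + v w` (Fermat in the field `A/v`), and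
raising to the power `q^{(e-1)d}`, which is additive in characteristic `p`, gives
`n ^ ((q^d - 1) q^{(e-1)d}) ≡ 1 mod v^e`; hence `n ^ m ≡ n ^ l mod v^e`, and the congruence
passes to the power sums `S̃_i` and to sums of their products. The star value is such a finite sum
because `S_i(-m) = 0` for `i > m` (write a monic of degree `i` as `X g + c` and sum over `c` first,
where `∑ c, c ^ 0 = q = 0`), so that `S̃_i(-m) = S_i(-m) - v ^ m S_{i-d}(-m)` vanishes for
`i > m + d`. -/

open Finset

section CommRing

variable {R : Type*} [CommRing R]

theorem dvd_prod_sub_prod {ι : Type*} (s : Finset ι) {k : R} {f g : ι → R}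
    (h : ∀ i ∈ s, k ∣ f i - g i) : k ∣ ∏ i ∈ s, f i - ∏ i ∈ s, g i := by
  rw [← Ideal.mem_span_singleton, ← Ideal.Quotient.eq, map_prod, map_prod]
  exact prod_congr rfl fun i hi => Ideal.Quotient.eq.2 (Ideal.mem_span_singleton.2 (h i hi))

theorem dvd_pow_sub_pow_of_modEq {k x : R} {N a b : ℕ} (hN : k ∣ x ^ N - 1)
    (hab : a ≡ b [MOD N]) : k ∣ x ^ a - x ^ b := by
  rw [← Ideal.mem_span_singleton, ← Ideal.Quotient.eq] at hN ⊢
  have hmod : ∀ c, Ideal.Quotient.mk (Ideal.span {k}) (x ^ c) =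
      Ideal.Quotient.mk (Ideal.span {k}) (x ^ (c % N)) := fun c => by
    conv_lhs => rw [← Nat.div_add_mod c N, pow_add, pow_mul]
    rw [map_mul, map_pow, hN, map_one, one_pow, one_mul]
  rw [hmod a, hmod b, hab]

end CommRing

section Semiring

variable {R : Type*} [Semiring R]

theorem Polynomial.finite_setOf_natDegree_le [Finite R] (i : ℕ) :
    {p : R[X] | p.natDegree ≤ i}.Finite := by
  refine Finite.of_injective
    (fun (p : {p : R[X] | p.natDegree ≤ i}) (j : Fin (i + 1)) => p.1.coeff j)
    fun p q hpq => Subtype.ext (Polynomial.ext fun k => ?_)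
  by_cases hk : k ≤ i
  · exact congrFun hpq ⟨k, Nat.lt_succ_of_le hk⟩
  · rw [coeff_eq_zero_of_natDegree_lt (p.2.trans_lt (not_le.1 hk)),
      coeff_eq_zero_of_natDegree_lt (q.2.trans_lt (not_le.1 hk))]

theorem Polynomial.Monic.X_mul_add_C [Nontrivial R] {g : R[X]} (hg : g.Monic) (c : R) :
    (X * g + C c).Monic ∧ (X * g + C c).natDegree = g.natDegree + 1 := by
  have hdeg : (X * g + C c).natDegree = g.natDegree + 1 := by
    rw [natDegree_add_C, natDegree_X_mul hg.ne_zero]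
  refine ⟨?_, hdeg⟩
  rw [Monic.def, Polynomial.leadingCoeff, hdeg]
  simp [hg.coeff_natDegree]

theorem Polynomial.Monic.divX_of_natDegree_eq_succ {n : R[X]} (hn : n.Monic) {i : ℕ}
    (hdeg : n.natDegree = i + 1) : n.divX.Monic ∧ n.divX.natDegree = i := by
  have hdeg' : n.divX.natDegree = i := by
    rw [natDegree_divX_eq_natDegree_tsub_one, hdeg, Nat.add_sub_cancel]
  refine ⟨?_, hdeg'⟩
  rw [Monic.def, Polynomial.leadingCoeff, hdeg', coeff_divX, ← hdeg]
  exact hn.coeff_natDegree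

end Semiring

section FiniteField

variable {F : Type*} [Field F] [Fintype F]

theorem sub_pow_card_pow (f g : F[X]) (k : ℕ) :
    (f - g) ^ Fintype.card F ^ k = f ^ Fintype.card F ^ k - g ^ Fintype.card F ^ k := by
  induction k with
  | zero => simp
  | succ k ih =>
    simp only [pow_succ, pow_mul, ih, ← FiniteField.expand_card, map_sub]

theorem Irreducible.dvd_pow_card_pow_natDegree_sub_one_sub_one {v n : F[X]}
    (hv : Irreducible v) (hn : ¬ v ∣ n) : v ∣ n ^ (Fintype.card F ^ v.natDegree - 1) - 1 := by
  have := Fact.mk hv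
  let pb := AdjoinRoot.powerBasis hv.ne_zero
  let : Fintype (AdjoinRoot v) := Module.fintypeOfFintype pb.basis
  have hcard : Fintype.card (AdjoinRoot v) = Fintype.card F ^ v.natDegree := by
    rw [Module.card_fintype pb.basis, Fintype.card_fin, AdjoinRoot.powerBasis_dim]
  have hn' : AdjoinRoot.mk v n ≠ 0 := by rwa [Ne, AdjoinRoot.mk_eq_zero]
  rw [← AdjoinRoot.mk_eq_zero, map_sub, map_pow, map_one, ← hcard,
    FiniteField.pow_card_sub_one_eq_one _ hn', sub_self]

theorem Irreducible.pow_dvd_pow_sub_one {v n : F[X]} (hv : Irreducible v) (hn : ¬ v ∣ n)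
    (e : ℕ) : v ^ e ∣ n ^ ((Fintype.card F ^ v.natDegree - 1) *
      Fintype.card F ^ ((e - 1) * v.natDegree)) - 1 := by
  obtain ⟨w, hw⟩ := hv.dvd_pow_card_pow_natDegree_sub_one_sub_one hn
  have hd : 0 < v.natDegree := natDegree_pos_iff_degree_pos.2 (degree_pos_of_irreducible hv)
  have he : e ≤ Fintype.card F ^ ((e - 1) * v.natDegree) :=
    calc e ≤ 2 ^ (e - 1) := by have := Nat.lt_two_pow_self (n := e - 1); omega
      _ ≤ Fintype.card F ^ (e - 1) := Nat.pow_le_pow_left Fintype.one_lt_card _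
      _ ≤ _ := Nat.pow_le_pow_right Fintype.card_pos (Nat.le_mul_of_pos_right _ hd)
  calc v ^ e ∣ (v * w) ^ Fintype.card F ^ ((e - 1) * v.natDegree) :=
        (pow_dvd_pow v he).trans (pow_dvd_pow_of_dvd (dvd_mul_right v w) _)
    _ = _ := by rw [← hw, sub_pow_card_pow, one_pow, ← pow_mul]

variable (F) in
noncomputable def monicsOfDegree (i : ℕ) : Finset F[X] :=
  ((Polynomial.finite_setOf_natDegree_le i).subset fun _ hn => hn.2.le :
    {n : F[X] | n.Monic ∧ n.natDegree = i}.Finite).toFinset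

theorem mem_monicsOfDegree {i : ℕ} {n : F[X]} :
    n ∈ monicsOfDegree F i ↔ n.Monic ∧ n.natDegree = i :=
  Set.Finite.mem_toFinset _

theorem powerSum_eq_sum (i m : ℕ) : powerSum F i m = ∑ n ∈ monicsOfDegree F i, n ^ m :=
  finsum_mem_eq_finite_toFinset_sum _ _

open scoped Classical in
theorem powerSumV_eq_sum (v : F[X]) (i m : ℕ) :
    powerSumV F v i m = ∑ n ∈ (monicsOfDegree F i).filter (¬ v ∣ ·), n ^ m := by
  rw [← finsum_mem_coe_finset, coe_filter]
  simp only [mem_monicsOfDegree, and_assoc]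
  rfl

theorem sum_monicsOfDegree_succ {M : Type*} [AddCommMonoid M] (i : ℕ) (f : F[X] → M) :
    ∑ n ∈ monicsOfDegree F (i + 1), f n =
      ∑ g ∈ monicsOfDegree F i, ∑ c : F, f (X * g + C c) := by
  rw [← sum_product']
  symm
  refine sum_nbij' (fun p => X * p.1 + C p.2) (fun n => (n.divX, n.coeff 0)) ?_ ?_ ?_ ?_ ?_
  · rintro ⟨g, c⟩ hg
    simp only [mem_product, mem_univ, and_true, mem_monicsOfDegree] at hg ⊢
    rw [← hg.2]
    exact hg.1.X_mul_add_C c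
  · intro n hn
    rw [mem_monicsOfDegree] at hn
    simpa [mem_monicsOfDegree] using hn.1.divX_of_natDegree_eq_succ hn.2
  · rintro ⟨g, c⟩ -
    ext k <;> simp [coeff_divX]
  · rintro n -
    exact X_mul_divX_add n
  · exact fun _ _ => rfl

theorem sum_X_mul_add_C_pow (g : F[X]) (m : ℕ) :
    ∑ c : F, (X * g + C c) ^ m =
      ∑ k ∈ range (m + 1),
        g ^ k * (X ^ k * C (∑ c : F, c ^ (m - k)) * (m.choose k : F[X])) := by
  simp_rw [add_pow, mul_pow]
  rw [sum_comm]
  refine sum_congr rfl fun k _ => ?_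
  simp only [← C_pow, map_sum, ← sum_mul, ← mul_sum]
  ring

theorem powerSum_eq_zero {i m : ℕ} (h : m < i) : powerSum F i m = 0 := by
  induction m using Nat.strong_induction_on generalizing i with
  | _ m ih =>
  obtain ⟨i, rfl⟩ : ∃ j, i = j + 1 := Nat.exists_eq_add_one.2 (by omega)
  rw [powerSum_eq_sum, sum_monicsOfDegree_succ]
  simp_rw [sum_X_mul_add_C_pow]
  rw [sum_comm]
  refine sum_eq_zero fun k hk => ?_
  rcases (Nat.lt_succ_iff.1 (mem_range.1 hk)).lt_or_eq with hkm | rfl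
  · rw [← sum_mul, ← powerSum_eq_sum, ih k hkm (by omega), zero_mul]
  · simp

open scoped Classical in
theorem filter_dvd_monicsOfDegree {v : F[X]} (hv : v.Monic) (j : ℕ) :
    (monicsOfDegree F (j + v.natDegree)).filter (v ∣ ·) =
      (monicsOfDegree F j).image (v * ·) := by
  ext n
  simp only [mem_filter, mem_image, mem_monicsOfDegree]
  constructor
  · rintro ⟨⟨hn, hdeg⟩, g, rfl⟩
    have hg : g.Monic := hv.of_mul_monic_left hn
    refine ⟨g, ⟨hg, ?_⟩, rfl⟩
    rw [natDegree_mul hv.ne_zero hg.ne_zero] at hdeg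
    omega
  · rintro ⟨g, ⟨hg, rfl⟩, rfl⟩
    refine ⟨⟨hv.mul hg, ?_⟩, dvd_mul_right v g⟩
    rw [natDegree_mul hv.ne_zero hg.ne_zero, add_comm]

theorem powerSumV_eq_zero {v : F[X]} (hv : v.Monic) {i m : ℕ} (h : m + v.natDegree < i) :
    powerSumV F v i m = 0 := by
  classical
  obtain ⟨j, rfl⟩ : ∃ j, i = j + v.natDegree := ⟨i - v.natDegree, by omega⟩
  have hsplit :=
    sum_filter_add_sum_filter_not (monicsOfDegree F (j + v.natDegree)) (v ∣ ·) (· ^ m)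
  rw [← powerSum_eq_sum, powerSum_eq_zero (by omega), filter_dvd_monicsOfDegree hv,
    sum_image fun _ _ _ _ => mul_left_cancel₀ hv.ne_zero, ← powerSumV_eq_sum] at hsplit
  simp_rw [mul_pow, ← mul_sum, ← powerSum_eq_sum, powerSum_eq_zero (show m < j by omega)]
    at hsplit
  simpa using hsplit

theorem pow_dvd_powerSumV_sub_powerSumV {v : F[X]} (hv : Irreducible v) {e a b : ℕ}
    (h : a ≡ b [MOD (Fintype.card F ^ v.natDegree - 1) *
      Fintype.card F ^ ((e - 1) * v.natDegree)]) (i : ℕ) :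
    v ^ e ∣ powerSumV F v i a - powerSumV F v i b := by
  classical
  rw [powerSumV_eq_sum, powerSumV_eq_sum, ← sum_sub_distrib]
  exact dvd_sum fun n hn =>
    dvd_pow_sub_pow_of_modEq (hv.pow_dvd_pow_sub_one (mem_filter.1 hn).2 e) h

open scoped Classical in
theorem zetaVStar_eq_sum {v : F[X]} (hv : v.Monic) {r N : ℕ} {m : ℕ → ℕ}
    (hm : ∀ j < r, m j + v.natDegree ≤ N) :
    zetaVStar F v r m =
      ∑ i ∈ (Fintype.piFinset fun _ : Fin r => range (N + 1)).filter Antitone,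
        ∏ j : Fin r, powerSumV F v (i j) (m j) := by
  refine finsum_mem_eq_sum_of_inter_support_eq _ (Set.ext fun i => ?_)
  simp only [Set.mem_inter_iff, Set.mem_ofPred_eq, Function.mem_support, coe_filter,
    Fintype.mem_piFinset, mem_range]
  refine ⟨fun ⟨ha, hne⟩ => ⟨⟨fun j => ?_, ha⟩, hne⟩, fun ⟨⟨_, ha⟩, hne⟩ => ⟨ha, hne⟩⟩
  by_contra hij
  exact hne (prod_eq_zero (mem_univ j) (powerSumV_eq_zero hv (by have := hm j j.isLt; omega)))

end FiniteField

theorem zetaVStar_kummer_general (F : Type*) [Field F] [Fintype F] (v : Polynomial F)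
    (hv : v.Monic) (hvirr : Irreducible v)
    (e r : ℕ) (m l : ℕ → ℕ)
    (h : ∀ i < r, m i ≡ l i
      [MOD (Fintype.card F ^ v.natDegree - 1) *
        Fintype.card F ^ ((e - 1) * v.natDegree)]) :
    v ^ e ∣ zetaVStar F v r m - zetaVStar F v r l := by
  set N := ∑ j ∈ range r, (m j + l j) + v.natDegree
  have hN : ∀ j < r, m j + l j + v.natDegree ≤ N := fun j hj =>
    Nat.add_le_add_right (single_le_sum (fun k _ => Nat.zero_le (m k + l k)) (mem_range.2 hj)) _
  rw [zetaVStar_eq_sum hv fun j hj => (hN j hj).trans' (by omega),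
    zetaVStar_eq_sum hv fun j hj => (hN j hj).trans' (by omega), ← sum_sub_distrib]
  exact dvd_sum fun i _ => dvd_prod_sub_prod _ fun j _ =>
    pow_dvd_powerSumV_sub_powerSumV hvirr (h j j.isLt) (i j)

/-- Kummer-type congruence for v-adic multiple zeta star values:
if `m_i ≡ l_i mod (q^d - 1)·q^{(e-1)d}` for all `1 ≤ i ≤ r`, then
`v^e ∣ ζ⋆_v(-m_1, …, -m_r) - ζ⋆_v(-l_1, …, -l_r)`. -/
theorem zetaVStar_kummer (F : Type*) [Field F] [Fintype F] (v : Polynomial F)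
    (hv : v.Monic) (hvirr : Irreducible v) (hd : 0 < v.natDegree)
    (e r : ℕ) (he : 1 ≤ e) (hr : 1 ≤ r) (m l : ℕ → ℕ)
    (h : ∀ i < r, m i ≡ l i
      [MOD (Fintype.card F ^ v.natDegree - 1) *
        Fintype.card F ^ ((e - 1) * v.natDegree)]) :
    v ^ e ∣ zetaVStar F v r m - zetaVStar F v r l :=
  zetaVStar_kummer_general F v hv hvirr e r m l h
end

section
/- (Enumeration underlying the multiple zeta measure.) Let e ≥ 1 and let α_1,…,α_r ∈ A with deg α_j < d·e for all j. Let T := {(n_1,…,n_r) ∈ A₊^r : d·e ≥ deg n_1 > deg n_2 > ⋯ > deg n_r ≥ 0 and n_j ≡ α_j mod v^e for all j}. Then: (1) if deg α_1 > ⋯ > deg α_r and all α_j are monic, then T = {(α_1,α_2,…,α_r), (α_1 + v^e, α_2,…,α_r)}; (2) if α_2,…,α_r are monic with deg α_2 > ⋯ > deg α_r (this condition being vacuous when r = 1), and either α_1 is not monic or (r ≥ 2 and deg α_1 ≤ deg α_2), then T = {(α_1 + v^e, α_2,…,α_r)}; (3) in all remaining cases T = ∅. -/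
open Polynomial

/-- The set `T` of tuples `(n_1, …, n_r)` of monic polynomials with
`d·e ≥ deg n_1 > deg n_2 > ⋯ > deg n_r ≥ 0` and `n_j ≡ α_j mod v^e` for all `j`. -/
def Tset (F : Type*) [Field F] [Fintype F] (v : Polynomial F) (e r : ℕ)
    (α : Fin r → Polynomial F) : Set (Fin r → Polynomial F) :=
  {n | (∀ j, (n j).Monic ∧ v ^ e ∣ n j - α j) ∧
    (StrictAnti fun j => (n j).natDegree) ∧ ∀ j, (n j).natDegree ≤ v.natDegree * e}

lemma add_pow_monic {F : Type*} [Field F] {v : Polynomial F} (hv : v.Monic) {e : ℕ}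
    {α : Polynomial F} (hα : α.natDegree < v.natDegree * e) :
    (α + v ^ e).Monic ∧ (α + v ^ e).natDegree = v.natDegree * e := by
  have hve : (v ^ e).Monic := hv.pow e
  have hd : (v ^ e).natDegree = v.natDegree * e := by
    rw [natDegree_pow]; ring
  have hlt : α.degree < (v ^ e).degree := by
    apply degree_lt_degree; omega
  exact ⟨hve.add_of_right hlt, by
    rw [natDegree_add_eq_right_of_natDegree_lt (by omega), hd]⟩

lemma key {F : Type*} [Field F] {v : Polynomial F} (hv : v.Monic)
    {e : ℕ} {α n : Polynomial F}
    (hα : α.natDegree < v.natDegree * e) (hmon : n.Monic)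
    (hdvd : v ^ e ∣ n - α) (hdeg : n.natDegree ≤ v.natDegree * e) :
    n = α ∨ (n = α + v ^ e ∧ n.natDegree = v.natDegree * e) := by
  obtain ⟨q, hq⟩ := hdvd
  have hve : (v ^ e).Monic := hv.pow e
  have hvd : (v ^ e).natDegree = v.natDegree * e := by rw [natDegree_pow]; ring
  by_cases hq0 : q = 0
  · left
    rw [hq0, mul_zero, sub_eq_zero] at hq
    exact hq
  · right
    have hn : n = α + v ^ e * q := by rw [← hq]; ring
    have hmuld : (v ^ e * q).natDegree = v.natDegree * e + q.natDegree := by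
      rw [natDegree_mul hve.ne_zero hq0, hvd]
    have hdegn : n.natDegree = v.natDegree * e + q.natDegree := by
      rw [hn, natDegree_add_eq_right_of_natDegree_lt (by omega), hmuld]
    have hq00 : q.natDegree = 0 := by omega
    obtain ⟨c, rfl⟩ := natDegree_eq_zero.mp hq00
    have hcoef : n.coeff (v.natDegree * e) = α.coeff (v.natDegree * e) +
        (v ^ e).coeff (v.natDegree * e) * c := by
      rw [hn, coeff_add, coeff_mul_C]
    have h1 : n.coeff (v.natDegree * e) = 1 := by
      have := hmon.coeff_natDegree
      rwa [hdegn, hq00, add_zero] at this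
    have h2 : α.coeff (v.natDegree * e) = 0 := coeff_eq_zero_of_natDegree_lt hα
    have h3 : (v ^ e).coeff (v.natDegree * e) = 1 := by
      have := hve.coeff_natDegree; rwa [hvd] at this
    rw [h1, h2, h3, zero_add, one_mul] at hcoef
    constructor
    · rw [hn, ← hcoef, map_one, mul_one]
    · omega

/-- Enumeration underlying the multiple zeta measure: for `α_1, …, α_r ∈ A` with
`deg α_j < d·e`,
(1) if `deg α_1 > ⋯ > deg α_r` and all `α_j` are monic, then
    `T = {(α_1, …, α_r), (α_1 + v^e, α_2, …, α_r)}`;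
(2) if `α_2, …, α_r` are monic with `deg α_2 > ⋯ > deg α_r`, and either `α_1` is not
    monic or (`r ≥ 2` and `deg α_1 ≤ deg α_2`), then `T = {(α_1 + v^e, α_2, …, α_r)}`;
(3) in all remaining cases `T = ∅`. -/
theorem Tset_enumeration (F : Type*) [Field F] [Fintype F] (v : Polynomial F)
    (hv : v.Monic) (hvirr : Irreducible v) (hd : 0 < v.natDegree)
    (e r : ℕ) (he : 1 ≤ e) (hr : 0 < r) (α : Fin r → Polynomial F)
    (hα : ∀ j, (α j).natDegree < v.natDegree * e) :
    (((∀ j, (α j).Monic) ∧ StrictAnti fun j => (α j).natDegree) →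
        Tset F v e r α =
          {α, Function.update α ⟨0, hr⟩ (α ⟨0, hr⟩ + v ^ e)}) ∧
    (((∀ j, (⟨0, hr⟩ : Fin r) < j → (α j).Monic) ∧
        StrictAntiOn (fun j => (α j).natDegree) {j | (⟨0, hr⟩ : Fin r) < j} ∧
        (¬ (α ⟨0, hr⟩).Monic ∨
          ∃ h1 : 1 < r, (α ⟨0, hr⟩).natDegree ≤ (α ⟨1, h1⟩).natDegree)) →
        Tset F v e r α = {Function.update α ⟨0, hr⟩ (α ⟨0, hr⟩ + v ^ e)}) ∧
    ((¬ ((∀ j, (α j).Monic) ∧ StrictAnti fun j => (α j).natDegree)) →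
      (¬ ((∀ j, (⟨0, hr⟩ : Fin r) < j → (α j).Monic) ∧
        StrictAntiOn (fun j => (α j).natDegree) {j | (⟨0, hr⟩ : Fin r) < j} ∧
        (¬ (α ⟨0, hr⟩).Monic ∨
          ∃ h1 : 1 < r, (α ⟨0, hr⟩).natDegree ≤ (α ⟨1, h1⟩).natDegree))) →
      Tset F v e r α = ∅) := by

  set z : Fin r := ⟨0, hr⟩ with hz
  have hzlt : ∀ j : Fin r, j ≠ z → z < j := by
    intro j hj
    rw [Fin.lt_def]
    exact Nat.pos_of_ne_zero (fun h => hj (Fin.ext h))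
  -- tail values are forced
  have tail : ∀ n ∈ Tset F v e r α, ∀ j, z < j → n j = α j := by
    intro n hn j hj
    obtain ⟨h1, h2, h3⟩ := hn
    rcases key hv (hα j) (h1 j).1 (h1 j).2 (h3 j) with h | ⟨_, hdeg⟩
    · exact h
    · exfalso
      have hlt2 : (n j).natDegree < (n z).natDegree := h2 hj
      have hle2 := h3 z
      omega
  -- value at z
  have headv : ∀ n ∈ Tset F v e r α, n z = α z ∨
      (n z = α z + v ^ e ∧ (n z).natDegree = v.natDegree * e) := by
    intro n hn
    exact key hv (hα z) ((hn.1 z).1) ((hn.1 z).2) (hn.2.2 z)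
  -- update membership
  have upd_mem : (∀ j, z < j → (α j).Monic) →
      StrictAntiOn (fun j => (α j).natDegree) {j | z < j} →
      Function.update α z (α z + v ^ e) ∈ Tset F v e r α := by
    intro hmon hanti
    have hm := add_pow_monic hv (hα z)
    refine ⟨?_, ?_, ?_⟩
    · intro j
      by_cases hj : j = z
      · subst hj
        rw [Function.update_self]
        exact ⟨hm.1, by simp⟩
      · rw [Function.update_of_ne hj]
        exact ⟨hmon j (hzlt j hj), by simp⟩
    · intro i j hij
      show (Function.update α z (α z + v ^ e) j).natDegree <
        (Function.update α z (α z + v ^ e) i).natDegree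
      by_cases hi : i = z
      · subst hi
        have hjz : j ≠ z := (ne_of_gt hij)
        rw [Function.update_self, Function.update_of_ne hjz]
        have := hα j
        omega
      · have hji : j ≠ z := by
          intro h; subst h
          exact absurd (lt_trans (hzlt i hi) hij) (lt_irrefl _)
        rw [Function.update_of_ne hi, Function.update_of_ne hji]
        exact hanti (hzlt i hi) (lt_trans (hzlt i hi) hij) hij
    · intro j
      by_cases hj : j = z
      · subst hj; rw [Function.update_self]; omega
      · rw [Function.update_of_ne hj]; exact le_of_lt (hα j)
  refine ⟨?_, ?_, ?_⟩
  · -- case 1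
    rintro ⟨hmon, hanti⟩
    ext n
    constructor
    · intro hn
      have ht := tail n hn
      rcases headv n hn with h | ⟨h, _⟩
      · left
        funext j
        by_cases hj : j = z
        · subst hj; exact h
        · exact ht j (hzlt j hj)
      · right
        funext j
        by_cases hj : j = z
        · subst hj; rw [Function.update_self]; exact h
        · rw [Function.update_of_ne hj]; exact ht j (hzlt j hj)
    · intro hn
      rcases hn with rfl | rfl
      · exact ⟨fun j => ⟨hmon j, by simp⟩, hanti, fun j => le_of_lt (hα j)⟩
      · exact upd_mem (fun j _ => hmon j) (fun i _ j _ hij => hanti hij)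
  · -- case 2
    rintro ⟨hmon, hanti, hcond⟩
    ext n
    constructor
    · intro hn
      have ht := tail n hn
      rcases headv n hn with h | ⟨h, _⟩
      · exfalso
        rcases hcond with hc | ⟨h1, hc⟩
        · exact hc (h ▸ (hn.1 z).1)
        · have hlt1 : z < ⟨1, h1⟩ := by rw [Fin.lt_def]; exact Nat.zero_lt_one
          have h21 : (n ⟨1, h1⟩).natDegree < (n z).natDegree := hn.2.1 hlt1
          rw [ht ⟨1, h1⟩ hlt1, h] at h21
          omega
      · show n = _
        funext j
        by_cases hj : j = z
        · subst hj; rw [Function.update_self]; exact h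
        · rw [Function.update_of_ne hj]; exact ht j (hzlt j hj)
    · intro hn
      rw [Set.mem_singleton_iff] at hn
      subst hn
      exact upd_mem hmon hanti
  · -- case 3
    intro hc1 hc2
    rw [Set.eq_empty_iff_forall_notMem]
    intro n hn
    have ht := tail n hn
    have htailmon : ∀ j, z < j → (α j).Monic := by
      intro j hj
      have := (hn.1 j).1
      rwa [ht j hj] at this
    have htailanti : StrictAntiOn (fun j => (α j).natDegree) {j | z < j} := by
      intro i hi j hj hij
      have hlt2 : (n j).natDegree < (n i).natDegree := hn.2.1 hij
      show (α j).natDegree < (α i).natDegree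
      rwa [ht i hi, ht j hj] at hlt2
    by_cases hm : (α z).Monic
    · by_cases hex : ∃ h1 : 1 < r, (α z).natDegree ≤ (α ⟨1, h1⟩).natDegree
      · exact hc2 ⟨htailmon, htailanti, Or.inr hex⟩
      · apply hc1
        push_neg at hex
        constructor
        · intro j
          by_cases hj : j = z
          · subst hj; exact hm
          · exact htailmon j (hzlt j hj)
        · intro i j hij
          by_cases hi : i = z
          · subst hi
            have hjz : z < j := hij
            have h1 : 1 < r := lt_of_le_of_lt (Fin.lt_def.mp hjz) j.isLt
            have hone : z < ⟨1, h1⟩ := by rw [Fin.lt_def]; exact Nat.zero_lt_one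
            have h01 : (α ⟨1, h1⟩).natDegree < (α z).natDegree := hex h1
            by_cases hj1 : j = ⟨1, h1⟩
            · subst hj1; simpa using h01
            · have h1j : (⟨1, h1⟩ : Fin r) < j := by
                rw [Fin.lt_def]
                have ha : z.val < j.val := Fin.lt_def.mp hjz
                have hb : j.val ≠ 1 := fun h => hj1 (Fin.ext h)
                have hzv : z.val = 0 := rfl
                have h1v : (⟨1, h1⟩ : Fin r).val = 1 := rfl
                simp only [hzv] at ha
                rw [h1v]
                omega
              have hstep : (α j).natDegree < (α ⟨1, h1⟩).natDegree :=
                htailanti hone hjz h1j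
              show (α j).natDegree < (α z).natDegree
              omega
          · exact htailanti (hzlt i hi) (lt_trans (hzlt i hi) hij) hij
    · exact hc2 ⟨htailmon, htailanti, Or.inl hm⟩
end
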